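/- arXiv:2208.00864 — 2 statements merged into one kernel-verified Lean document; each statement's English description precedes it below -/
import Mathlib

section
/- The second Griffiths inequality: for the ferromagnetic Ising model on a finite vertex set V with nonnegative coupling constants and nonnegative magnetic field, for all subsets A, B ⊆ V one has ⟨σ_A σ_B⟩ ≥ ⟨σ_A⟩⟨σ_B⟩. -/
open Finset

/-- The spin value attached to a Boolean: `+1` or `-1`. -/
noncomputable def spin (b : Bool) : ℝ := if b then 1 else -1

/-- Boltzmann weight `exp(-βH(σ))` for the Hamiltonian
`H(σ) = -Σ_{x,y} J_{x,y} σ_x σ_y - h Σ_x σ_x`. -/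
noncomputable def isingWeight {V : Type*} [Fintype V]
    (J : V → V → ℝ) (h β : ℝ) (σ : V → Bool) : ℝ :=
  Real.exp (β * ((∑ x, ∑ y, J x y * spin (σ x) * spin (σ y)) + h * ∑ x, spin (σ x)))

/-- The Ising expectation `⟨X⟩ = Z⁻¹ Σ_σ X(σ) e^{-βH(σ)}`. -/
noncomputable def isingExpect {V : Type*} [Fintype V] [DecidableEq V]
    (J : V → V → ℝ) (h β : ℝ) (X : (V → Bool) → ℝ) : ℝ :=
  (∑ σ : V → Bool, X σ * isingWeight J h β σ) / (∑ σ : V → Bool, isingWeight J h β σ)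

lemma spin_mul_self (b : Bool) : spin b * spin b = 1 := by cases b <;> simp [spin]

lemma spin_beq (a b : Bool) : spin (a == b) = spin a * spin b := by
  cases a <;> cases b <;> norm_num [spin]

lemma spin_le_one (b : Bool) : spin b ≤ 1 := by cases b <;> norm_num [spin]

lemma neg_one_le_spin (b : Bool) : -1 ≤ spin b := by cases b <;> norm_num [spin]

/-- Sum over all configurations of a spin monomial is nonnegative. -/
lemma sum_spin_monomial_nonneg {V : Type*} [Fintype V] [DecidableEq V] (e : V → ℕ) :
    0 ≤ ∑ σ : V → Bool, ∏ x, spin (σ x) ^ e x := by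
  rw [← Fintype.prod_sum (fun (x : V) (b : Bool) => spin b ^ e x)]
  refine Finset.prod_nonneg fun x _ => ?_
  rw [Fintype.sum_bool]
  rcases Nat.even_or_odd (e x) with he | he
  · simp [spin, he.neg_one_pow]
  · simp [spin, he.neg_one_pow]

/-- Key induction: nonnegativity for powers of a ferromagnetic polynomial. -/
lemma sum_spin_pow_nonneg {V : Type*} [Fintype V] [DecidableEq V] {ι : Type*}
    (s : Finset ι) (a : ι → ℝ) (c : ι → V → ℕ) (ha : ∀ i ∈ s, 0 ≤ a i) :
    ∀ (n : ℕ) (e : V → ℕ),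
      0 ≤ ∑ σ : V → Bool,
        (∏ x, spin (σ x) ^ e x) * (∑ i ∈ s, a i * ∏ x, spin (σ x) ^ c i x) ^ n := by
  intro n
  induction n with
  | zero => intro e; simpa using sum_spin_monomial_nonneg e
  | succ n ih =>
    intro e
    have key : ∀ σ : V → Bool,
        (∏ x, spin (σ x) ^ e x) * (∑ i ∈ s, a i * ∏ x, spin (σ x) ^ c i x) ^ (n + 1)
        = ∑ i ∈ s, a i * ((∏ x, spin (σ x) ^ (e x + c i x)) *
            (∑ j ∈ s, a j * ∏ x, spin (σ x) ^ c j x) ^ n) := by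
      intro σ
      rw [pow_succ']
      rw [Finset.sum_mul, Finset.mul_sum]
      refine Finset.sum_congr rfl fun i _ => ?_
      simp only [pow_add, Finset.prod_mul_distrib]
      ring
    rw [Finset.sum_congr rfl fun σ _ => key σ, Finset.sum_comm]
    refine Finset.sum_nonneg fun i hi => ?_
    rw [← Finset.mul_sum]
    exact mul_nonneg (ha i hi) (ih _)

/-- First Griffiths inequality, general form. -/
lemma griffiths_first {V : Type*} [Fintype V] [DecidableEq V] {ι : Type*}
    (s : Finset ι) (a : ι → ℝ) (c : ι → V → ℕ) (ha : ∀ i ∈ s, 0 ≤ a i) (e : V → ℕ) :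
    0 ≤ ∑ σ : V → Bool,
      (∏ x, spin (σ x) ^ e x) *
        Real.exp (∑ i ∈ s, a i * ∏ x, spin (σ x) ^ c i x) := by
  have hexp : ∀ y : ℝ, Real.exp y = ∑' n : ℕ, y ^ n / n.factorial := by
    intro y
    rw [Real.exp_eq_exp_ℝ, NormedSpace.exp_eq_tsum_div]
  have hsummable : ∀ σ : V → Bool, Summable (fun n : ℕ =>
      (∏ x, spin (σ x) ^ e x) *
        ((∑ i ∈ s, a i * ∏ x, spin (σ x) ^ c i x) ^ n / n.factorial)) :=
    fun σ => (Real.summable_pow_div_factorial _).mul_left _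
  calc (0:ℝ) ≤ ∑' n : ℕ, ∑ σ : V → Bool,
        (∏ x, spin (σ x) ^ e x) *
          ((∑ i ∈ s, a i * ∏ x, spin (σ x) ^ c i x) ^ n / n.factorial) := by
        refine tsum_nonneg fun n => ?_
        have := sum_spin_pow_nonneg s a c ha n e
        have : (0:ℝ) ≤ (∑ σ : V → Bool, (∏ x, spin (σ x) ^ e x) *
            (∑ i ∈ s, a i * ∏ x, spin (σ x) ^ c i x) ^ n) / n.factorial :=
          div_nonneg this (by positivity)
        calc (0:ℝ) ≤ _ := this
          _ = _ := by rw [Finset.sum_div]; exact Finset.sum_congr rfl fun σ _ => by ring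
    _ = ∑ σ : V → Bool, ∑' n : ℕ,
        (∏ x, spin (σ x) ^ e x) *
          ((∑ i ∈ s, a i * ∏ x, spin (σ x) ^ c i x) ^ n / n.factorial) :=
        (Summable.tsum_finsetSum fun σ _ => hsummable σ).symm ▸ rfl
    _ = _ := by
        refine Finset.sum_congr rfl fun σ _ => ?_
        rw [hexp, ← tsum_mul_left]

lemma abs_spin (b : Bool) : |spin b| = 1 := by cases b <;> norm_num [spin]

lemma prod_spin_le_one {V : Type*} (B : Finset V) (t : V → Bool) :
    ∏ x ∈ B, spin (t x) ≤ 1 := by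
  have habs : |∏ x ∈ B, spin (t x)| = 1 := by
    rw [Finset.abs_prod]
    simp [abs_spin]
  calc ∏ x ∈ B, spin (t x) ≤ |∏ x ∈ B, spin (t x)| := le_abs_self _
    _ = 1 := habs

lemma one_add_spin_nonneg (b : Bool) : 0 ≤ 1 + spin b := by cases b <;> norm_num [spin]

lemma one_add_spin_mul_nonneg (a b : Bool) : 0 ≤ 1 + spin a * spin b := by
  cases a <;> cases b <;> norm_num [spin]

lemma prod_pow_single {V : Type*} [Fintype V] [DecidableEq V] (s : V → Bool) (x : V) :
    ∏ z, spin (s z) ^ (if z = x then 1 else 0) = spin (s x) := by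
  simp [pow_ite, Finset.prod_ite_eq']

lemma prod_spin_indicator {V : Type*} [Fintype V] [DecidableEq V] (s : V → Bool)
    (A : Finset V) :
    ∏ x, spin (s x) ^ (if x ∈ A then 1 else 0) = ∏ x ∈ A, spin (s x) := by
  simp only [pow_ite, pow_one, pow_zero]
  rw [Finset.prod_ite_mem, Finset.univ_inter]

/-- Inner sum nonnegativity for the duplicated system at fixed `t`. -/
lemma inner_nonneg {V : Type*} [Fintype V] [DecidableEq V]
    (J : V → V → ℝ) (h β : ℝ) (hJ : ∀ x y, 0 ≤ J x y) (hh : 0 ≤ h) (hβ : 0 ≤ β)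
    (A B : Finset V) (t : V → Bool) :
    0 ≤ ∑ s : V → Bool,
      ((∏ x ∈ A, spin (s x)) *
          ((∏ x ∈ B, spin (s x)) - ∏ x ∈ B, spin (s x == t x))) *
        (isingWeight J h β s * isingWeight J h β (fun x => s x == t x)) := by
  classical
  set a : (V × V) ⊕ V → ℝ :=
    Sum.elim (fun p => β * J p.1 p.2 * (1 + spin (t p.1) * spin (t p.2)))
      (fun x => β * h * (1 + spin (t x))) with ha_def
  set c : (V × V) ⊕ V → V → ℕ :=
    Sum.elim (fun p z => (if z = p.1 then 1 else 0) + (if z = p.2 then 1 else 0))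
      (fun x z => if z = x then 1 else 0) with hc_def
  set e : V → ℕ := fun x => (if x ∈ A then 1 else 0) + (if x ∈ B then 1 else 0) with he_def
  have hrw : ∀ s : V → Bool,
      ((∏ x ∈ A, spin (s x)) *
          ((∏ x ∈ B, spin (s x)) - ∏ x ∈ B, spin (s x == t x))) *
        (isingWeight J h β s * isingWeight J h β (fun x => s x == t x))
      = (1 - ∏ x ∈ B, spin (t x)) *
          ((∏ x, spin (s x) ^ e x) *
            Real.exp (∑ i : (V × V) ⊕ V, a i * ∏ x, spin (s x) ^ c i x)) := by
    intro s
    have h1 : ∏ x ∈ B, spin (s x == t x)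
        = (∏ x ∈ B, spin (s x)) * ∏ x ∈ B, spin (t x) := by
      simp only [spin_beq, Finset.prod_mul_distrib]
    have h2 : ∏ x, spin (s x) ^ e x
        = (∏ x ∈ A, spin (s x)) * ∏ x ∈ B, spin (s x) := by
      simp only [he_def, pow_add, Finset.prod_mul_distrib, prod_spin_indicator]
    have h3 : isingWeight J h β s * isingWeight J h β (fun x => s x == t x)
        = Real.exp (∑ i : (V × V) ⊕ V, a i * ∏ x, spin (s x) ^ c i x) := by
      rw [isingWeight, isingWeight, ← Real.exp_add]
      congr 1
      rw [Fintype.sum_sum_type, Fintype.sum_prod_type]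
      have hmon1 : ∀ x y : V,
          a (Sum.inl (x, y)) * ∏ z, spin (s z) ^ c (Sum.inl (x, y)) z
          = β * (J x y * spin (s x) * spin (s y))
            + β * (J x y * (spin (s x) * spin (t x)) *
                (spin (s y) * spin (t y))) := by
        intro x y
        simp only [ha_def, hc_def, Sum.elim_inl, pow_add, Finset.prod_mul_distrib,
          prod_pow_single]
        ring
      have hmon2 : ∀ x : V,
          a (Sum.inr x) * ∏ z, spin (s z) ^ c (Sum.inr x) z
          = β * (h * spin (s x)) + β * (h * (spin (s x) * spin (t x))) := by
        intro x
        simp only [ha_def, hc_def, Sum.elim_inr, prod_pow_single]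
        ring
      simp only [hmon1, hmon2, spin_beq, mul_add, Finset.mul_sum, Finset.sum_add_distrib]
      ring
    rw [h1, h3, h2]
    ring
  rw [Finset.sum_congr rfl fun s _ => hrw s, ← Finset.mul_sum]
  refine mul_nonneg (by linarith [prod_spin_le_one B t]) ?_
  refine griffiths_first Finset.univ a c (fun i _ => ?_) e
  rcases i with p | x
  · exact mul_nonneg (mul_nonneg hβ (hJ p.1 p.2)) (one_add_spin_mul_nonneg _ _)
  · exact mul_nonneg (mul_nonneg hβ hh) (one_add_spin_nonneg _)

/-- **Second Griffiths inequality**: for the ferromagnetic Ising model on a finite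
vertex set with nonnegative coupling constants, nonnegative magnetic field and `β ≥ 0`,
for all `A, B ⊆ V` one has `⟨σ_A σ_B⟩ ≥ ⟨σ_A⟩⟨σ_B⟩`. -/
theorem griffiths_second_inequality {V : Type*} [Fintype V] [DecidableEq V]
    (J : V → V → ℝ) (h β : ℝ) (hJ : ∀ x y, 0 ≤ J x y) (hh : 0 ≤ h) (hβ : 0 ≤ β)
    (A B : Finset V) :
    isingExpect J h β (fun σ => (∏ x ∈ A, spin (σ x)) * ∏ x ∈ B, spin (σ x)) ≥
      isingExpect J h β (fun σ => ∏ x ∈ A, spin (σ x)) *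
        isingExpect J h β (fun σ => ∏ x ∈ B, spin (σ x)) := by
  classical
  set W := isingWeight J h β with hW
  have hWpos : ∀ σ : V → Bool, 0 < W σ := fun σ => Real.exp_pos _
  have hZ : 0 < ∑ σ : V → Bool, W σ :=
    Finset.sum_pos (fun σ _ => hWpos σ) Finset.univ_nonempty
  -- the key inequality on unnormalized sums
  have key : (∑ σ : V → Bool, (∏ x ∈ A, spin (σ x)) * W σ) *
        (∑ σ : V → Bool, (∏ x ∈ B, spin (σ x)) * W σ)
      ≤ (∑ σ : V → Bool, ((∏ x ∈ A, spin (σ x)) * ∏ x ∈ B, spin (σ x)) * W σ) *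
        (∑ σ : V → Bool, W σ) := by
    rw [← sub_nonneg]
    have expand : (∑ σ : V → Bool, ((∏ x ∈ A, spin (σ x)) * ∏ x ∈ B, spin (σ x)) * W σ) *
          (∑ σ : V → Bool, W σ)
        - (∑ σ : V → Bool, (∏ x ∈ A, spin (σ x)) * W σ) *
          (∑ σ : V → Bool, (∏ x ∈ B, spin (σ x)) * W σ)
        = ∑ σ : V → Bool, ∑ τ : V → Bool,
            ((∏ x ∈ A, spin (σ x)) * ((∏ x ∈ B, spin (σ x)) - ∏ x ∈ B, spin (τ x))) *
              (W σ * W τ) := by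
      rw [Finset.sum_mul_sum, Finset.sum_mul_sum, ← Finset.sum_sub_distrib]
      refine Finset.sum_congr rfl fun σ _ => ?_
      rw [← Finset.sum_sub_distrib]
      exact Finset.sum_congr rfl fun τ _ => by ring
    rw [expand]
    -- reindex the inner sum via the involution `τ ↦ (σ == τ)`
    have reindex : ∀ σ : V → Bool,
        ∑ τ : V → Bool,
            ((∏ x ∈ A, spin (σ x)) * ((∏ x ∈ B, spin (σ x)) - ∏ x ∈ B, spin (τ x))) *
              (W σ * W τ)
        = ∑ t : V → Bool,
            ((∏ x ∈ A, spin (σ x)) *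
                ((∏ x ∈ B, spin (σ x)) - ∏ x ∈ B, spin (σ x == t x))) *
              (W σ * W (fun x => σ x == t x)) := by
      intro σ
      have hinv : Function.Involutive (fun t : V → Bool => fun x => σ x == t x) := by
        intro t
        funext x
        show (σ x == (σ x == t x)) = t x
        cases σ x <;> cases t x <;> rfl
      exact (Fintype.sum_bijective _ hinv.bijective _ _ fun t => rfl).symm
    rw [Finset.sum_congr rfl fun σ _ => reindex σ, Finset.sum_comm]
    exact Finset.sum_nonneg fun t _ => inner_nonneg J h β hJ hh hβ A B t
  rw [ge_iff_le, isingExpect, isingExpect, isingExpect, div_mul_div_comm,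
    div_le_div_iff₀ (by positivity) hZ]
  calc (∑ σ : V → Bool, (∏ x ∈ A, spin (σ x)) * W σ) *
        (∑ σ : V → Bool, (∏ x ∈ B, spin (σ x)) * W σ) * (∑ σ : V → Bool, W σ)
      ≤ (∑ σ : V → Bool, ((∏ x ∈ A, spin (σ x)) * ∏ x ∈ B, spin (σ x)) * W σ) *
        (∑ σ : V → Bool, W σ) * (∑ σ : V → Bool, W σ) :=
        mul_le_mul_of_nonneg_right key hZ.le
    _ = _ := by ring
end

section
/- High-temperature exponential decay via the current (or high-temperature expansion) mapping: for the Ising model at zero field on a finite graph G of maximal degree d, for all distinct vertices x, y at graph distance n, ⟨σ_x σ_y⟩_{G,β,0} ≤ (d·tanh(β))^n / (1 - d·tanh(β)) whenever d·tanh(β) < 1. In particular, on ℤ^d the spin-spin correlations decay exponentially fast when β is small enough, so β_c(ℤ^d) > 0. -/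
/-!
Expanding `exp (β σ_u σ_v) = cosh β (1 + tanh β σ_u σ_v)` over the edges and summing over spins
kills every edge set except those whose degrees have the parity prescribed by the observable, so
with `t = tanh β` the correlation is `Σ_{F ∈ Even(G,{x,y})} t^|F| / Σ_{F ∈ Even(G)} t^|F|`.
Every `F ∈ Even(G,{x,y})` contains a path `p` from `x` to `y`, and `F \ p ∈ Even(G)`; as `F` is
recovered from `(p, F \ p)`, the numerator is at most the denominator times `Σ_p t^|p|`. There
are at most `d^k` paths of length `k` and none shorter than `dist x y`, so a geometric series
bounds this sum.
-/

open Finset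

/-- Interaction energy `Σ_{{x,y}∈E} σ_x σ_y` of a spin configuration. -/
noncomputable def interaction {V : Type*} [Fintype V] [DecidableEq V]
    (G : SimpleGraph V) [DecidableRel G.Adj] (σ : V → Bool) : ℝ :=
  ∑ e ∈ G.edgeFinset,
    Sym2.lift ⟨fun x y => spin (σ x) * spin (σ y), fun _ _ => by ring⟩ e

theorem spin_eq_one_or_eq_neg_one (b : Bool) : spin b = 1 ∨ spin b = -1 := by
  cases b <;> simp [spin]

theorem sum_spin_pow (k : ℕ) : ∑ b : Bool, spin b ^ k = if Even k then 2 else 0 := by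
  rcases Nat.even_or_odd k with hk | hk
  · simp [spin, hk.neg_one_pow, hk]
  · simp [spin, hk.neg_one_pow, Nat.not_even_iff_odd.mpr hk]

theorem Real.exp_mul_eq_cosh_mul_one_add_tanh (β : ℝ) {s : ℝ} (hs : s = 1 ∨ s = -1) :
    Real.exp (β * s) = Real.cosh β * (1 + Real.tanh β * s) := by
  have hsinh : Real.cosh β * Real.tanh β = Real.sinh β := by
    rw [Real.tanh_eq_sinh_div_cosh]; field_simp
  rcases hs with rfl | rfl
  · rw [mul_one, ← Real.cosh_add_sinh, ← hsinh]; ring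
  · rw [mul_neg_one, ← Real.cosh_sub_sinh, ← hsinh]; ring

theorem Fintype.prod_pow_pi_single {V M : Type*} [Fintype V] [DecidableEq V] [CommMonoid M]
    (f : V → M) (x : V) : ∏ v, f v ^ (Pi.single x 1 : V → ℕ) v = f x := by
  rw [Fintype.prod_eq_single x fun v hv => by simp [hv]]
  simp

noncomputable def edgeSpin {V : Type*} (σ : V → Bool) (e : Sym2 V) : ℝ :=
  Sym2.lift ⟨fun x y => spin (σ x) * spin (σ y), fun _ _ => by ring⟩ e

theorem edgeSpin_eq_one_or_eq_neg_one {V : Type*} (σ : V → Bool) (e : Sym2 V) :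
    edgeSpin σ e = 1 ∨ edgeSpin σ e = -1 := by
  induction e using Sym2.ind with
  | _ a b =>
    rcases spin_eq_one_or_eq_neg_one (σ a) with ha | ha <;>
      rcases spin_eq_one_or_eq_neg_one (σ b) with hb | hb <;>
      simp [edgeSpin, ha, hb]

section EdgeDegree

variable {V : Type*} [DecidableEq V]

def edgeDegree (F : Finset (Sym2 V)) (v : V) : ℕ := #{e ∈ F | v ∈ e}

theorem edgeDegree_sdiff_add {F P : Finset (Sym2 V)} (h : P ⊆ F) (v : V) :
    edgeDegree (F \ P) v + edgeDegree P v = edgeDegree F v := by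
  simp only [edgeDegree, card_filter]
  exact sum_sdiff h

theorem edgeDegree_erase_add {F : Finset (Sym2 V)} {a c : V} (hac : a ≠ c) (he : s(a, c) ∈ F)
    (v : V) :
    edgeDegree (F.erase s(a, c)) v + (Pi.single a 1 + Pi.single c 1 : V → ℕ) v =
      edgeDegree F v := by
  rw [edgeDegree, edgeDegree, filter_erase]
  by_cases hv : v ∈ s(a, c)
  · have hmem : s(a, c) ∈ {e ∈ F | v ∈ e} := mem_filter.mpr ⟨he, hv⟩
    rw [card_erase_of_mem hmem]
    have hpos := card_pos.mpr ⟨_, hmem⟩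
    rcases Sym2.mem_iff.mp hv with rfl | rfl <;> simp [hac, hac.symm] <;> omega
  · rw [erase_eq_of_notMem (by simp [hv])]
    obtain ⟨hva, hvc⟩ : v ≠ a ∧ v ≠ c := by simpa using hv
    simp [hva, hvc]

end EdgeDegree

section HighTemperatureExpansion

variable {V : Type*} [Fintype V] [DecidableEq V]

theorem sum_prod_spin_pow (m : V → ℕ) :
    ∑ σ : V → Bool, ∏ v, spin (σ v) ^ m v =
      if ∀ v, Even (m v) then 2 ^ Fintype.card V else 0 := by
  rw [← Fintype.prod_sum fun v b => spin b ^ m v]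
  simp_rw [sum_spin_pow]
  split_ifs with h
  · simp [h]
  · push Not at h
    obtain ⟨v, hv⟩ := h
    exact prod_eq_zero (mem_univ v) (if_neg hv)

theorem edgeSpin_eq_prod {e : Sym2 V} (he : ¬e.IsDiag) (σ : V → Bool) :
    edgeSpin σ e = ∏ v, if v ∈ e then spin (σ v) else 1 := by
  induction e using Sym2.ind with
  | _ a b =>
    have hab : a ≠ b := by simpa using he
    have hmem : ∀ v, v ∈ s(a, b) ↔ v ∈ ({a, b} : Finset V) := by simp
    simp_rw [hmem, prod_ite_mem, univ_inter, prod_pair hab]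
    rfl

theorem prod_edgeSpin {F : Finset (Sym2 V)} (hF : ∀ e ∈ F, ¬e.IsDiag) (σ : V → Bool) :
    ∏ e ∈ F, edgeSpin σ e = ∏ v, spin (σ v) ^ edgeDegree F v := by
  rw [prod_congr rfl fun e he => edgeSpin_eq_prod (hF e he) σ, prod_comm]
  refine prod_congr rfl fun v _ => ?_
  rw [← prod_filter, prod_const, edgeDegree]

variable (G : SimpleGraph V) [DecidableRel G.Adj]

theorem exp_mul_interaction (β : ℝ) (σ : V → Bool) :
    Real.exp (β * interaction G σ) = Real.cosh β ^ #G.edgeFinset *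
      ∑ F ∈ G.edgeFinset.powerset, Real.tanh β ^ #F * ∏ e ∈ F, edgeSpin σ e := by
  have hsum : β * interaction G σ = ∑ e ∈ G.edgeFinset, β * edgeSpin σ e := mul_sum _ _ _
  simp_rw [hsum, Real.exp_sum,
    Real.exp_mul_eq_cosh_mul_one_add_tanh β (edgeSpin_eq_one_or_eq_neg_one σ _),
    prod_mul_distrib, prod_const, prod_one_add, prod_mul_distrib, prod_const]

/-- Edge sets of `G` whose degree at every vertex `v` has the parity of `m v`: the paper's
`Even(G)` for `m = 0` and `Even(G, {x, y})` for `m = Pi.single x 1 + Pi.single y 1`. -/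
def SimpleGraph.edgeSetsWithParity (m : V → ℕ) : Finset (Finset (Sym2 V)) :=
  {F ∈ G.edgeFinset.powerset | ∀ v, Even (edgeDegree F v + m v)}

theorem sum_prod_spin_pow_mul_exp (β : ℝ) (m : V → ℕ) :
    ∑ σ : V → Bool, (∏ v, spin (σ v) ^ m v) * Real.exp (β * interaction G σ) =
      Real.cosh β ^ #G.edgeFinset * 2 ^ Fintype.card V *
        ∑ F ∈ G.edgeSetsWithParity m, Real.tanh β ^ #F := by
  have hterm : ∀ F ∈ G.edgeFinset.powerset,
      ∑ σ : V → Bool, (∏ v, spin (σ v) ^ m v) * (Real.tanh β ^ #F * ∏ e ∈ F, edgeSpin σ e) =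
        if ∀ v, Even (edgeDegree F v + m v) then 2 ^ Fintype.card V * Real.tanh β ^ #F
        else 0 := by
    intro F hF
    have hdiag : ∀ e ∈ F, ¬e.IsDiag := fun e he =>
      G.not_isDiag_of_mem_edgeSet (G.mem_edgeFinset.mp (mem_powerset.mp hF he))
    simp_rw [mul_left_comm _ (Real.tanh β ^ #F), ← mul_sum, prod_edgeSpin hdiag,
      ← prod_mul_distrib, ← pow_add, add_comm (m _), sum_prod_spin_pow]
    split_ifs <;> ring
  calc _ = Real.cosh β ^ #G.edgeFinset * ∑ F ∈ G.edgeFinset.powerset, ∑ σ : V → Bool,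
        (∏ v, spin (σ v) ^ m v) * (Real.tanh β ^ #F * ∏ e ∈ F, edgeSpin σ e) := by
        simp_rw [exp_mul_interaction, mul_left_comm _ (Real.cosh β ^ _), mul_sum]
        rw [sum_comm]
    _ = _ := by
        rw [sum_congr rfl hterm, ← sum_filter, ← mul_sum, mul_assoc]
        rfl

end HighTemperatureExpansion

namespace SimpleGraph

variable {V : Type*} [DecidableEq V]

section

variable {G : SimpleGraph V}

theorem exists_walk_of_even_edgeDegree {F : Finset (Sym2 V)} (hF : ∀ e ∈ F, e ∈ G.edgeSet)
    {a b : V} (hpar : ∀ v, Even (edgeDegree F v + (Pi.single a 1 + Pi.single b 1 : V → ℕ) v)) :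
    ∃ p : G.Walk a b, ∀ e ∈ p.edges, e ∈ F := by
  induction F using Finset.strongInduction generalizing a with
  | _ F ih =>
    by_cases hab : a = b
    · subst hab
      exact ⟨.nil, by simp⟩
    obtain ⟨e, he⟩ : {e ∈ F | a ∈ e}.Nonempty := by
      have hodd := hpar a
      simp only [Pi.add_apply, Pi.single_eq_same, Pi.single_eq_of_ne hab] at hodd
      refine card_pos.mp (Nat.pos_of_ne_zero fun h => ?_)
      rw [edgeDegree, h] at hodd
      simp at hodd
    obtain ⟨heF, hae⟩ := mem_filter.mp he
    obtain ⟨c, rfl⟩ : ∃ c, s(a, c) = e := ⟨_, Sym2.other_spec hae⟩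
    have hadj : G.Adj a c := hF _ heF
    -- removing the edge `ac` moves the odd vertex `a` to `c`
    have hpar' : ∀ v, Even (edgeDegree (F.erase s(a, c)) v +
        (Pi.single c 1 + Pi.single b 1 : V → ℕ) v) := by
      intro v
      have hdeg := edgeDegree_erase_add hadj.ne heF v
      have hv := hpar v
      simp only [Pi.add_apply, Nat.even_iff] at hdeg hv ⊢
      omega
    obtain ⟨q, hq⟩ := ih _ (erase_ssubset heF) (fun e he => hF e (mem_of_mem_erase he)) hpar'
    refine ⟨.cons hadj q, fun e he => ?_⟩
    rcases List.mem_cons.mp (by simpa using he) with rfl | he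
    · exact heF
    · exact mem_of_mem_erase (hq e he)

theorem Walk.IsTrail.even_edgeDegree_add {a b : V} {p : G.Walk a b} (hp : p.IsTrail) (v : V) :
    Even (edgeDegree p.edges.toFinset v + (Pi.single a 1 + Pi.single b 1 : V → ℕ) v) := by
  have hcount : edgeDegree p.edges.toFinset v = p.edges.countP (v ∈ ·) := by
    have hfilter : {e ∈ p.edges.toFinset | v ∈ e} = (p.edges.filter (v ∈ ·)).toFinset := by
      ext; simp
    rw [edgeDegree, hfilter, List.toFinset_card_of_nodup (hp.edges_nodup.filter _),
      List.countP_eq_length_filter]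
  have := hp.even_countP_edges_iff v
  rw [hcount, Nat.even_add]
  by_cases hva : v = a <;> by_cases hvb : v = b <;> simp_all [Pi.single_apply, eq_comm]

end

section

variable [Fintype V] (G : SimpleGraph V) [DecidableRel G.Adj]

theorem sdiff_mem_edgeSetsWithParity_zero {m : V → ℕ} {F P : Finset (Sym2 V)}
    (hF : F ∈ G.edgeSetsWithParity m) (hP : ∀ v, Even (edgeDegree P v + m v)) (hPF : P ⊆ F) :
    F \ P ∈ G.edgeSetsWithParity 0 := by
  simp only [edgeSetsWithParity, mem_filter, mem_powerset] at hF ⊢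
  refine ⟨sdiff_subset.trans hF.1, fun v => ?_⟩
  have hsum := edgeDegree_sdiff_add hPF v
  have hFv := hF.2 v
  have hPv := hP v
  simp only [Pi.zero_apply, add_zero, Nat.even_iff] at hFv hPv ⊢
  omega

theorem sum_edgeSetsWithParity_superset_le {t : ℝ} (ht : 0 ≤ t) {m : V → ℕ}
    {P : Finset (Sym2 V)} (hP : ∀ v, Even (edgeDegree P v + m v)) :
    ∑ F ∈ G.edgeSetsWithParity m with P ⊆ F, t ^ #F ≤
      t ^ #P * ∑ F ∈ G.edgeSetsWithParity 0, t ^ #F := by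
  set S := {F ∈ G.edgeSetsWithParity m | P ⊆ F}
  have hinj : Set.InjOn (· \ P) S := fun F hF F' hF' h => by
    rw [← sdiff_union_of_subset (mem_filter.mp hF).2, ← sdiff_union_of_subset (mem_filter.mp hF').2]
    exact congrArg (· ∪ P) h
  have himage : S.image (· \ P) ⊆ G.edgeSetsWithParity 0 := by
    simp only [image_subset_iff, S, mem_filter]
    exact fun F hF => G.sdiff_mem_edgeSetsWithParity_zero hF.1 hP hF.2
  calc ∑ F ∈ S, t ^ #F = t ^ #P * ∑ F ∈ S, t ^ #(F \ P) := by
        rw [mul_sum]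
        refine sum_congr rfl fun F hF => ?_
        rw [← pow_add, add_comm, card_sdiff_add_card_eq_card (mem_filter.mp hF).2]
    _ = t ^ #P * ∑ F ∈ S.image (· \ P), t ^ #F := by rw [sum_image hinj]
    _ ≤ t ^ #P * ∑ F ∈ G.edgeSetsWithParity 0, t ^ #F := by gcongr

theorem exists_path_of_mem_edgeSetsWithParity {x y : V} {F : Finset (Sym2 V)}
    (hF : F ∈ G.edgeSetsWithParity (Pi.single x 1 + Pi.single y 1)) :
    ∃ p : G.Path x y, p.1.edges.toFinset ⊆ F := by
  simp only [edgeSetsWithParity, mem_filter, mem_powerset] at hF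
  obtain ⟨q, hq⟩ := exists_walk_of_even_edgeDegree
    (fun e he => G.mem_edgeFinset.mp (hF.1 he)) hF.2
  exact ⟨q.toPath, fun e he => hq e (q.edges_toPath_subset_edges (List.mem_toFinset.mp he))⟩

theorem sum_edgeSetsWithParity_pair_le {t : ℝ} (ht : 0 ≤ t) (x y : V) :
    ∑ F ∈ G.edgeSetsWithParity (Pi.single x 1 + Pi.single y 1), t ^ #F ≤
      (∑ p : G.Path x y, t ^ p.1.length) *
        ∑ F ∈ G.edgeSetsWithParity 0, t ^ #F := by
  set A := G.edgeSetsWithParity (Pi.single x 1 + Pi.single y 1)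
  calc ∑ F ∈ A, t ^ #F
      ≤ ∑ F ∈ A, ∑ p : G.Path x y with p.1.edges.toFinset ⊆ F, t ^ #F := by
        refine sum_le_sum fun F hF => ?_
        obtain ⟨p, hp⟩ := G.exists_path_of_mem_edgeSetsWithParity hF
        exact single_le_sum (f := fun _ => t ^ #F) (fun _ _ => by positivity)
          (mem_filter.mpr ⟨mem_univ p, hp⟩)
    _ = ∑ p : G.Path x y, ∑ F ∈ A with p.1.edges.toFinset ⊆ F, t ^ #F :=
        sum_comm' fun _ _ => by simp only [mem_filter, mem_univ, true_and, and_comm]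
    _ ≤ ∑ p : G.Path x y, t ^ p.1.length *
          ∑ F ∈ G.edgeSetsWithParity 0, t ^ #F := by
        refine sum_le_sum fun p _ => ?_
        have hcard : #p.1.edges.toFinset = p.1.length := by
          rw [List.toFinset_card_of_nodup p.2.isTrail.edges_nodup, Walk.length_edges]
        rw [← hcard]
        exact G.sum_edgeSetsWithParity_superset_le ht p.2.isTrail.even_edgeDegree_add
    _ = _ := (sum_mul _ _ _).symm

theorem card_finsetWalkLength_le {d : ℕ} (hdeg : ∀ v, G.degree v ≤ d) (k : ℕ) (u v : V) :
    #(G.finsetWalkLength k u v) ≤ d ^ k := by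
  induction k generalizing u with
  | zero =>
    rw [finsetWalkLength]
    split_ifs with h
    · subst h; simp
    · simp
  | succ k ih =>
    rw [finsetWalkLength]
    calc _ ≤ ∑ w : G.neighborSet u, #(G.finsetWalkLength k w v) :=
          card_biUnion_le.trans (by simp only [card_map, le_refl])
      _ ≤ ∑ _w : G.neighborSet u, d ^ k := sum_le_sum fun w _ => ih w
      _ = G.degree u * d ^ k := by
          rw [sum_const, card_univ, card_neighborSet_eq_degree, smul_eq_mul]
      _ ≤ d ^ (k + 1) := by rw [pow_succ']; gcongr; exact hdeg u

theorem sum_path_pow_length_le {d : ℕ} (hdeg : ∀ v, G.degree v ≤ d) {t : ℝ} (ht : 0 ≤ t)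
    (hdt : d * t < 1) (x y : V) :
    ∑ p : G.Path x y, t ^ p.1.length ≤ (d * t) ^ G.dist x y / (1 - d * t) := by
  have hlength : ∀ p ∈ (univ : Finset (G.Path x y)),
      p.1.length ∈ Ico (G.dist x y) (Fintype.card V) :=
    fun p _ => mem_Ico.mpr ⟨dist_le p.1, p.2.length_lt⟩
  calc ∑ p : G.Path x y, t ^ p.1.length
      = ∑ k ∈ Ico (G.dist x y) (Fintype.card V), ∑ p : G.Path x y with p.1.length = k,
          t ^ p.1.length := (sum_fiberwise_of_maps_to hlength _).symm
    _ ≤ ∑ k ∈ Ico (G.dist x y) (Fintype.card V), (d * t) ^ k := by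
        refine sum_le_sum fun k _ => ?_
        have hcard : #{p : G.Path x y | p.1.length = k} ≤ d ^ k :=
          (card_le_card_of_injOn (fun p : G.Path x y => p.1)
            (fun p hp => mem_finsetWalkLength_iff.mpr (mem_filter.mp hp).2)
            Subtype.val_injective.injOn).trans (G.card_finsetWalkLength_le hdeg k x y)
        rw [sum_congr rfl fun p hp => by rw [(mem_filter.mp hp).2], sum_const, nsmul_eq_mul,
          mul_pow]
        gcongr
        exact_mod_cast hcard
    _ ≤ (d * t) ^ G.dist x y / (1 - d * t) := geom_sum_Ico_le_of_lt_one (by positivity) hdt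

end

end SimpleGraph

open SimpleGraph in
theorem high_temperature_exponential_decay_general {V : Type*} [Fintype V] [DecidableEq V]
    (G : SimpleGraph V) [DecidableRel G.Adj] (β : ℝ) (hβ : 0 ≤ β)
    (d : ℕ) (hdeg : ∀ v : V, G.degree v ≤ d) (hsmall : (d : ℝ) * Real.tanh β < 1)
    (x y : V) (n : ℕ) (hdist : G.dist x y = n) :
    (∑ σ : V → Bool, spin (σ x) * spin (σ y) * Real.exp (β * interaction G σ)) /
        (∑ σ : V → Bool, Real.exp (β * interaction G σ)) ≤
      ((d : ℝ) * Real.tanh β) ^ n / (1 - (d : ℝ) * Real.tanh β) := by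
  subst hdist
  have ht : 0 ≤ Real.tanh β := by
    rw [Real.tanh_eq_sinh_div_cosh]
    exact div_nonneg (Real.sinh_nonneg_iff.mpr hβ) (Real.cosh_pos β).le
  have hnum := sum_prod_spin_pow_mul_exp G β (Pi.single x 1 + Pi.single y 1)
  simp only [Pi.add_apply, pow_add, prod_mul_distrib, Fintype.prod_pow_pi_single] at hnum
  have hden := sum_prod_spin_pow_mul_exp G β 0
  simp only [Pi.zero_apply, pow_zero, prod_const_one, one_mul] at hden
  have heven_pos : 0 < ∑ F ∈ G.edgeSetsWithParity 0, Real.tanh β ^ #F := by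
    refine sum_pos' (fun _ _ => by positivity) ⟨∅, ?_, by simp⟩
    simp [edgeSetsWithParity, edgeDegree]
  rw [hnum, hden, mul_div_mul_left _ _ (by positivity), div_le_iff₀ heven_pos]
  calc _ ≤ (∑ p : G.Path x y, Real.tanh β ^ p.1.length) *
          ∑ F ∈ G.edgeSetsWithParity 0, Real.tanh β ^ #F :=
        G.sum_edgeSetsWithParity_pair_le ht x y
    _ ≤ _ := by gcongr; exact G.sum_path_pow_length_le hdeg ht hsmall x y

/-- **High-temperature exponential decay of correlations**: for the Ising model at
zero field on a finite graph of maximal degree `d`, for distinct vertices `x, y` at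
graph distance `n`, whenever `d·tanh(β) < 1`,
`⟨σ_x σ_y⟩ ≤ (d·tanh β)^n / (1 - d·tanh β)`.
In particular spin-spin correlations decay exponentially fast for small `β`,
so `β_c > 0`. -/
theorem high_temperature_exponential_decay {V : Type*} [Fintype V] [DecidableEq V]
    (G : SimpleGraph V) [DecidableRel G.Adj] (β : ℝ) (hβ : 0 ≤ β)
    (d : ℕ) (hdeg : ∀ v : V, G.degree v ≤ d) (hsmall : (d : ℝ) * Real.tanh β < 1)
    (x y : V) (hxy : x ≠ y) (n : ℕ) (hdist : G.dist x y = n) :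
    (∑ σ : V → Bool, spin (σ x) * spin (σ y) * Real.exp (β * interaction G σ)) /
        (∑ σ : V → Bool, Real.exp (β * interaction G σ)) ≤
      ((d : ℝ) * Real.tanh β) ^ n / (1 - (d : ℝ) * Real.tanh β) :=
  high_temperature_exponential_decay_general G β hβ d hdeg hsmall x y n hdist
end
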